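/- Let β = 1.02. The function g(s) = 1 - (1 + βs + βs²)e^{-βs} has exactly one zero in (0,∞), and this zero lies in the interval (1,2). -/

import Mathlib

/-! Since `g' (s) = β s e^{-β s} (β s + β - 2)`, the function `g` (with `g 0 = 0`) decreases on
`[0, (2 - β)/β]` and increases afterwards, so it is negative on the first interval and has at most
one zero to the right of it. For `β = 1.02` the sign change happens between `g 1 < 0` and
`g 2 > 0`, which reduce to `e^{1.02} < 3.04` and `e^{2.04} > 7.12`. -/

open Real Set

noncomputable def g (β s : ℝ) : ℝ := 1 - (1 + β * s + β * s ^ 2) * exp (-β * s)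

namespace g

variable {β : ℝ}

theorem hasDerivAt (β s : ℝ) :
    HasDerivAt (g β) (β * s * exp (-β * s) * (β * s + β - 2)) s := by
  have hexp : HasDerivAt (fun s => exp (-β * s)) (exp (-β * s) * -β) s := by
    simpa using ((hasDerivAt_id s).const_mul (-β)).exp
  have hpoly : HasDerivAt (fun s => 1 + β * s + β * s ^ 2) (β + β * (2 * s)) s := by
    simpa using (((hasDerivAt_id s).const_mul β).const_add 1).fun_add
      ((hasDerivAt_pow 2 s).const_mul β)
  exact ((hpoly.fun_mul hexp).const_sub 1).congr_deriv (by ring)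

theorem continuous (β : ℝ) : Continuous (g β) :=
  continuous_iff_continuousAt.2 fun s => (hasDerivAt β s).continuousAt

theorem apply_zero (β : ℝ) : g β 0 = 0 := by simp [g]

theorem strictAntiOn (hβ : 0 < β) : StrictAntiOn (g β) (Icc 0 ((2 - β) / β)) := by
  refine strictAntiOn_of_deriv_neg (convex_Icc _ _) (continuous β).continuousOn fun s hs => ?_
  rw [interior_Icc] at hs
  have hneg : β * s + β - 2 < 0 := by
    have := (lt_div_iff₀ hβ).1 hs.2
    linarith
  rw [(hasDerivAt β s).deriv]
  exact mul_neg_of_pos_of_neg (by have := hs.1; positivity) hneg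

theorem strictMonoOn (hβ : 0 < β) (hβ₂ : β ≤ 2) : StrictMonoOn (g β) (Ici ((2 - β) / β)) := by
  refine strictMonoOn_of_deriv_pos (convex_Ici _) (continuous β).continuousOn fun s hs => ?_
  rw [interior_Ici] at hs
  have hpos : 0 < β * s + β - 2 := by
    have := (div_lt_iff₀ hβ).1 hs
    linarith
  have hs0 : 0 < s := lt_of_le_of_lt (div_nonneg (by linarith) hβ.le) hs
  rw [(hasDerivAt β s).deriv]
  exact mul_pos (by positivity) hpos

theorem neg_of_pos_of_le (hβ : 0 < β) {s : ℝ} (hs : 0 < s) (hs' : s ≤ (2 - β) / β) :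
    g β s < 0 := by
  have hβ' : 0 ≤ (2 - β) / β := hs.le.trans hs'
  simpa [apply_zero] using strictAntiOn hβ ⟨le_rfl, hβ'⟩ ⟨hs.le, hs'⟩ hs

theorem eq_of_pos_of_eq_zero (hβ : 0 < β) (hβ₂ : β ≤ 2) {s t : ℝ} (hs : 0 < s) (ht : 0 < t)
    (hgs : g β s = 0) (hgt : g β t = 0) : s = t := by
  have mem : ∀ u, 0 < u → g β u = 0 → u ∈ Ici ((2 - β) / β) := fun u hu hgu =>
    le_of_not_gt fun h => (neg_of_pos_of_le hβ hu h.le).ne hgu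
  exact (strictMonoOn hβ hβ₂).injOn (mem s hs hgs) (mem t ht hgt) (hgs.trans hgt.symm)

theorem neg_iff {s : ℝ} : g β s < 0 ↔ exp (β * s) < 1 + β * s + β * s ^ 2 := by
  rw [g, neg_mul, exp_neg, ← div_eq_mul_inv, sub_neg, one_lt_div (exp_pos _)]

theorem pos_iff {s : ℝ} : 0 < g β s ↔ 1 + β * s + β * s ^ 2 < exp (β * s) := by
  rw [g, neg_mul, exp_neg, ← div_eq_mul_inv, sub_pos, div_lt_one (exp_pos _)]

end g

theorem exp_one_point_zero_two_lt : exp 1.02 < 3.04 := by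
  have h1 := exp_one_lt_d9
  have h2 : exp 0.02 < 1 / (1 - 0.02) :=
    exp_bound_div_one_sub_of_interval' (by norm_num) (by norm_num)
  rw [show (1.02 : ℝ) = 1 + 0.02 by norm_num, exp_add]
  calc exp 1 * exp 0.02 < 2.7182818286 * (1 / (1 - 0.02)) :=
        mul_lt_mul'' h1 h2 (exp_pos _).le (exp_pos _).le
    _ < 3.04 := by norm_num

theorem seven_point_one_two_lt_exp : (7.12 : ℝ) < exp 2.04 := by
  have h1 := exp_one_gt_d9
  calc (7.12 : ℝ) < 2.7182818283 * 2.7182818283 := by norm_num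
    _ < exp 1 * exp 1 := mul_lt_mul'' h1 h1 (by norm_num) (by norm_num)
    _ = exp 2 := by rw [← exp_add]; norm_num
    _ < exp 2.04 := exp_lt_exp.2 (by norm_num)

theorem stmt_8 :
    ∃ s : ℝ,
      (0 < s ∧ 1 - (1 + 1.02 * s + 1.02 * s ^ 2) * Real.exp (-(1.02 : ℝ) * s) = 0) ∧
      (∀ t : ℝ, 0 < t →
        1 - (1 + 1.02 * t + 1.02 * t ^ 2) * Real.exp (-(1.02 : ℝ) * t) = 0 → t = s) ∧
      s ∈ Set.Ioo (1 : ℝ) 2 := by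
  have hg1 : g 1.02 1 < 0 := g.neg_iff.2 (by norm_num; linarith [exp_one_point_zero_two_lt])
  have hg2 : 0 < g 1.02 2 := g.pos_iff.2 (by norm_num; linarith [seven_point_one_two_lt_exp])
  obtain ⟨s, hs, hgs⟩ := intermediate_value_Ioo (by norm_num) (g.continuous 1.02).continuousOn
    (show (0 : ℝ) ∈ Ioo (g 1.02 1) (g 1.02 2) from ⟨hg1, hg2⟩)
  have hs0 : 0 < s := by linarith [hs.1]
  exact ⟨s, ⟨hs0, hgs⟩, fun t ht hgt => g.eq_of_pos_of_eq_zero (by norm_num) (by norm_num) ht hs0 hgt hgs, hs⟩
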